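/- arXiv:2401.08248 — 2 statements merged into one kernel-verified Lean document; each statement's English description precedes it below -/
import Mathlib

section
/- Let D₂ = I₂ + I₂·τ + [[0,0],[θ,0]]·τ² ∈ M₂(K{τ}) where θ ∈ K. Then for every n ≥ 1, the coefficient of the highest power of τ appearing in D₂ⁿ (namely τ^{n+1}) is the matrix [[0,0],[x,0]] for some nonzero x ∈ F_q[θ] ⊆ K; in particular this leading coefficient is not invertible in M₂(K). -/
/-!
With `u = 1 + τ` and `v = ι θ * τ ^ 2`, the powers of `D₂ = !![u, 0; v, u]` are
`!![uⁿ, 0; cₙ, uⁿ]` with `cₙ₊₁ = cₙ u + uⁿ v`. Only top coefficients need tracking: `uⁿ` has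
degree `n` and top coefficient `1`, and moving `ι θ` past `τⁿ` turns it into `θ ^ q ^ n`, so `cₙ`
has degree `n + 1` and top coefficient `∑_{i<n} θ ^ q ^ i`. This is the value at `θ` of the
polynomial `∑_{i<n} X ^ q ^ i`, which is nonzero because `q ≥ 2` makes its exponents distinct.
-/

open Finset Polynomial

/-- The coefficient `a` of `τ ^ d` may be `0`: this only bounds the degree of `x` by `d`. -/
def HasTopCoeff {K R : Type*} [Semiring K] [Semiring R] (ι : K →+* R) (τ : R)
    (x : R) (d : ℕ) (a : K) : Prop :=
  ∃ f : ℕ → K, f d = a ∧ x = ∑ k ∈ range (d + 1), ι (f k) * τ ^ k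

namespace HasTopCoeff

variable {K R : Type*} [Semiring K] [Semiring R] {ι : K →+* R} {τ : R}
  {x y : R} {d : ℕ} {a b : K}

theorem zero (d : ℕ) : HasTopCoeff ι τ 0 d 0 :=
  ⟨0, rfl, by simp⟩

theorem one : HasTopCoeff ι τ 1 0 1 :=
  ⟨1, rfl, by simp⟩

theorem add (hx : HasTopCoeff ι τ x d a) (hy : HasTopCoeff ι τ y d b) :
    HasTopCoeff ι τ (x + y) d (a + b) := by
  obtain ⟨f, rfl, rfl⟩ := hx
  obtain ⟨g, rfl, rfl⟩ := hy
  exact ⟨f + g, rfl, by simp only [Pi.add_apply, map_add, add_mul, sum_add_distrib]⟩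

theorem succ (hx : HasTopCoeff ι τ x d a) : HasTopCoeff ι τ x (d + 1) 0 := by
  obtain ⟨f, rfl, rfl⟩ := hx
  refine ⟨fun k => if k ≤ d then f k else 0, by simp, ?_⟩
  rw [eq_comm, sum_range_succ _ (d + 1)]
  simp only [Nat.not_succ_le_self, if_false, map_zero, zero_mul, add_zero]
  exact sum_congr rfl fun k hk => by rw [if_pos (Nat.lt_succ_iff.mp (mem_range.mp hk))]

theorem mul_tau (hx : HasTopCoeff ι τ x d a) : HasTopCoeff ι τ (x * τ) (d + 1) a := by
  obtain ⟨f, rfl, rfl⟩ := hx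
  refine ⟨fun k => if k = 0 then 0 else f (k - 1), by simp, ?_⟩
  rw [sum_mul, sum_range_succ' _ (d + 1)]
  simp [mul_assoc, ← pow_succ]

theorem coeff_self {coeff : R → ℕ → K}
    (hcoeff : ∀ (N : ℕ) (f : ℕ → K),
      coeff (∑ k ∈ range (N + 1), ι (f k) * τ ^ k) = fun k => if k ≤ N then f k else 0)
    (hx : HasTopCoeff ι τ x d a) : coeff x d = a := by
  obtain ⟨f, rfl, rfl⟩ := hx
  simp [hcoeff]

theorem coeff_of_lt {coeff : R → ℕ → K}
    (hcoeff : ∀ (N : ℕ) (f : ℕ → K),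
      coeff (∑ k ∈ range (N + 1), ι (f k) * τ ^ k) = fun k => if k ≤ N then f k else 0)
    (hx : HasTopCoeff ι τ x d a) {k : ℕ} (hk : d < k) : coeff x k = 0 := by
  obtain ⟨f, rfl, rfl⟩ := hx
  simp [hcoeff, hk]

theorem mul_one_add_tau (hx : HasTopCoeff ι τ x d a) :
    HasTopCoeff ι τ (x * (1 + τ)) (d + 1) a := by
  simpa [mul_add] using hx.succ.add hx.mul_tau

theorem pow_one_add_tau (n : ℕ) : HasTopCoeff ι τ ((1 + τ) ^ n) n 1 := by
  induction n with
  | zero => simpa using one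
  | succ n ih => simpa [pow_succ] using ih.mul_one_add_tau

end HasTopCoeff

section Twisted

variable {K R : Type*} [Semiring K] [Semiring R] {ι : K →+* R} {τ : R} {q : ℕ}

theorem tau_pow_mul_map (twist : ∀ a : K, τ * ι a = ι (a ^ q) * τ) (k : ℕ) (a : K) :
    τ ^ k * ι a = ι (a ^ q ^ k) * τ ^ k := by
  induction k generalizing a with
  | zero => simp
  | succ k ih =>
    rw [pow_succ, mul_assoc, twist, ← mul_assoc, ih, mul_assoc, ← pow_succ, ← pow_mul,
      ← pow_succ']

theorem HasTopCoeff.mul_map (twist : ∀ a : K, τ * ι a = ι (a ^ q) * τ) {x : R} {d : ℕ}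
    {a : K} (hx : HasTopCoeff ι τ x d a) (b : K) :
    HasTopCoeff ι τ (x * ι b) d (a * b ^ q ^ d) := by
  obtain ⟨f, rfl, rfl⟩ := hx
  refine ⟨fun k => f k * b ^ q ^ k, rfl, ?_⟩
  rw [sum_mul]
  exact sum_congr rfl fun k _ => by rw [mul_assoc, tau_pow_mul_map twist, ← mul_assoc, map_mul]

theorem exists_pow_eq_and_hasTopCoeff (twist : ∀ a : K, τ * ι a = ι (a ^ q) * τ) (θ : K)
    (n : ℕ) : ∃ c : R, !![1 + τ, 0; ι θ * τ ^ 2, 1 + τ] ^ n = !![(1 + τ) ^ n, 0; c, (1 + τ) ^ n] ∧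
      HasTopCoeff ι τ c (n + 1) (∑ i ∈ range n, θ ^ q ^ i) := by
  induction n with
  | zero => exact ⟨0, by simp [Matrix.one_fin_two], by simpa using HasTopCoeff.zero 1⟩
  | succ n ih =>
    obtain ⟨c, hpow, hc⟩ := ih
    refine ⟨c * (1 + τ) + (1 + τ) ^ n * (ι θ * τ ^ 2), ?_, ?_⟩
    · rw [pow_succ, hpow, Matrix.mul_fin_two]
      simp [pow_succ]
    · have hθ : HasTopCoeff ι τ ((1 + τ) ^ n * (ι θ * τ ^ 2)) (n + 2) (θ ^ q ^ n) := by
        simpa only [one_mul, mul_assoc, pow_two] using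
          ((HasTopCoeff.pow_one_add_tau n).mul_map twist θ).mul_tau.mul_tau
      rw [sum_range_succ]
      exact hc.mul_one_add_tau.add hθ

end Twisted

theorem Polynomial.sum_X_pow_ne_zero {R : Type*} [Semiring R] [Nontrivial R] {s : Finset ℕ}
    (hs : s.Nonempty) {e : ℕ → ℕ} (he : Set.InjOn e s) : ∑ i ∈ s, (X : R[X]) ^ e i ≠ 0 := by
  obtain ⟨i, hi⟩ := hs
  intro h
  have hcoeff := congrArg (coeff · (e i)) h
  simp only [finsetSum_coeff, coeff_X_pow, coeff_zero] at hcoeff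
  rw [sum_eq_single_of_mem i hi fun j hj hji => if_neg fun hij => hji (he hj hi hij.symm),
    if_pos rfl] at hcoeff
  exact one_ne_zero hcoeff

theorem sum_pow_pow_ne_zero {F K : Type*} [CommRing F] [Nontrivial F] [CommRing K] [Algebra F K]
    {θ : K} (hθ : Transcendental F θ) {q : ℕ} (hq : 1 < q) {n : ℕ} (hn : 1 ≤ n) :
    ∑ i ∈ range n, θ ^ q ^ i ≠ 0 := by
  have hp := sum_X_pow_ne_zero (R := F) (nonempty_range_iff.mpr (Nat.one_le_iff_ne_zero.mp hn))
    (Nat.pow_right_injective hq).injOn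
  intro h
  exact hp ((transcendental_iff.mp hθ) _ (by simpa [map_sum] using h))

theorem leading_coeff_D2_pow_general (q : ℕ) (Fq K R : Type*)
    [Field Fq] [Fintype Fq] (hcard : Fintype.card Fq = q)
    [Field K] [Algebra Fq K] [Ring R]
    (θ : K) (hθ : Transcendental Fq θ)
    (ι : K →+* R) (τ : R)
    (twist : ∀ a : K, τ * ι a = ι (a ^ q) * τ)
    (coeff : R → ℕ → K)
    (hcoeff : ∀ (N : ℕ) (a : ℕ → K),
      coeff (∑ k ∈ Finset.range (N + 1), ι (a k) * τ ^ k)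
        = fun k => if k ≤ N then a k else 0)
    (D2 : Matrix (Fin 2) (Fin 2) R)
    (hD2 : D2 = !![1 + τ, 0; ι θ * τ ^ 2, 1 + τ]) :
    ∀ n : ℕ, 1 ≤ n → ∃ x : K, x ≠ 0 ∧ x ∈ Algebra.adjoin Fq ({θ} : Set K) ∧
      (Matrix.of fun i j => coeff ((D2 ^ n) i j) (n + 1)) = !![(0 : K), 0; x, 0] ∧
      (∀ k, n + 1 < k → ∀ i j, coeff ((D2 ^ n) i j) k = 0) ∧
      ¬ IsUnit (!![(0 : K), 0; x, 0]) := by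
  intro n hn
  obtain ⟨c, hpow, hc⟩ := exists_pow_eq_and_hasTopCoeff twist θ n
  have hdiag := HasTopCoeff.pow_one_add_tau (ι := ι) (τ := τ) n
  have hzero := HasTopCoeff.zero (ι := ι) (τ := τ) 0
  have hq : 1 < q := hcard ▸ Fintype.one_lt_card
  refine ⟨∑ i ∈ range n, θ ^ q ^ i, sum_pow_pow_ne_zero hθ hq hn,
    Subalgebra.sum_mem _ fun i _ => pow_mem (Algebra.self_mem_adjoin_singleton Fq θ) _,
    ?_, ?_, by simp [Matrix.isUnit_iff_isUnit_det]⟩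
  · rw [hD2, hpow]
    ext i j
    fin_cases i <;> fin_cases j <;>
      simp [hdiag.coeff_of_lt hcoeff, hzero.coeff_of_lt hcoeff, hc.coeff_self hcoeff]
  · intro k hk i j
    rw [hD2, hpow]
    fin_cases i <;> fin_cases j <;>
      simp [hdiag.coeff_of_lt hcoeff (by omega : n < k),
        hzero.coeff_of_lt hcoeff (by omega : 0 < k), hc.coeff_of_lt hcoeff hk]

/-- Let `D₂ = I₂ + I₂·τ + [[0,0],[θ,0]]·τ² ∈ M₂(K{τ})` where `θ ∈ K` is
transcendental over `F_q`.  Then for every `n ≥ 1`, the coefficient of the highest power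
of `τ` appearing in `D₂ ^ n` (namely `τ ^ (n+1)`) is the matrix `[[0,0],[x,0]]` for some
nonzero `x ∈ F_q[θ] ⊆ K`; in particular this leading coefficient is not invertible in
`M₂(K)`.  The twisted polynomial ring `K{τ}` is axiomatized via `(R, ι, τ, coeff)`. -/
theorem leading_coeff_D2_pow (q : ℕ) (Fq K R : Type*)
    [Field Fq] [Fintype Fq] (hcard : Fintype.card Fq = q)
    [Field K] [Algebra Fq K] [Ring R]
    (θ : K) (hθ : Transcendental Fq θ)
    (ι : K →+* R) (τ : R)
    (twist : ∀ a : K, τ * ι a = ι (a ^ q) * τ)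
    (coeff : R → ℕ → K)
    (hrepr : ∀ x : R, ∃ N : ℕ,
      x = ∑ k ∈ Finset.range (N + 1), ι (coeff x k) * τ ^ k ∧ ∀ k > N, coeff x k = 0)
    (hcoeff : ∀ (N : ℕ) (a : ℕ → K),
      coeff (∑ k ∈ Finset.range (N + 1), ι (a k) * τ ^ k)
        = fun k => if k ≤ N then a k else 0)
    (D2 : Matrix (Fin 2) (Fin 2) R)
    (hD2 : D2 = !![1 + τ, 0; ι θ * τ ^ 2, 1 + τ]) :
    ∀ n : ℕ, 1 ≤ n → ∃ x : K, x ≠ 0 ∧ x ∈ Algebra.adjoin Fq ({θ} : Set K) ∧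
      (Matrix.of fun i j => coeff ((D2 ^ n) i j) (n + 1)) = !![(0 : K), 0; x, 0] ∧
      (∀ k, n + 1 < k → ∀ i j, coeff ((D2 ^ n) i j) k = 0) ∧
      ¬ IsUnit (!![(0 : K), 0; x, 0]) :=
  leading_coeff_D2_pow_general q Fq K R hcard θ hθ ι τ twist coeff hcoeff D2 hD2
end

section
/- Over K({σ})[t], the matrix t·I₂ − D₂, where D₂ = I₂ + I₂τ + [[0,0],[θ,0]]τ², can be transformed by elementary row and column operations into the diagonal matrix diag(1, λ₂), where λ₂ = (t − τ − 1)(−σ²θ^{-1})(t − τ − 1). Equivalently, there exist invertible matrices P, Q ∈ GL₂(K({σ})[t]) with P·(tI₂ − D₂)·Q = diag(1, λ₂). -/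
/-!
With `a = t - τ - 1` and `u = θ τ²`, the matrix is `!![a, 0; -u, a]`, and `u` is a unit of
`F[t]` because `θ ≠ 0` and `σ ≠ 0`. Over any ring, two elementary reductions using the unit
`-u` as a pivot turn `!![a, 0; -u, a]` into `diag(1, -a u⁻¹ a)`, and here `u⁻¹ = σ² θ⁻¹`.
-/

open Polynomial

namespace Matrix

variable {R : Type*} [Ring R]

theorem isUnit_rowReduction_fin_two (a : R) (u : Rˣ) :
    IsUnit !![0, -↑u⁻¹; 1, a * ↑u⁻¹] :=
  ⟨⟨_, !![a, 1; -↑u, 0], by simp [one_fin_two, mul_assoc], by simp [one_fin_two]⟩, rfl⟩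

theorem isUnit_colReduction_fin_two (b : R) : IsUnit !![1, -b; 0, -1] :=
  ⟨⟨_, !![1, -b; 0, -1], by simp [one_fin_two], by simp [one_fin_two]⟩, rfl⟩

theorem exists_isUnit_mul_mul_eq_diagonal_fin_two (a : R) (u : Rˣ) :
    ∃ P Q : Matrix (Fin 2) (Fin 2) R, IsUnit P ∧ IsUnit Q ∧
      P * !![a, 0; -↑u, a] * Q = diagonal ![1, a * -↑u⁻¹ * a] := by
  refine ⟨_, _, isUnit_rowReduction_fin_two a u, isUnit_colReduction_fin_two (↑u⁻¹ * a), ?_⟩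
  rw [diagonal_fin_two]
  simp [mul_assoc]

end Matrix

theorem tI_sub_D2_diagonalization_general (K F : Type*)
    [Field K] [DivisionRing F]
    (ι : K →+* F) (σ τ : F) (hσ : σ ≠ 0) (hτ : τ = σ⁻¹)
    (θ : K) (hθ : θ ≠ 0) :
    ∃ P Q : Matrix (Fin 2) (Fin 2) (Polynomial F), IsUnit P ∧ IsUnit Q ∧
      P * !![X - C τ - 1, 0; -(C (ι θ * τ ^ 2)), X - C τ - 1] * Q
        = Matrix.diagonal
            ![1, (X - C τ - 1) * C (-(σ ^ 2 * (ι θ)⁻¹)) * (X - C τ - 1)] := by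
  have hu : ι θ * τ ^ 2 ≠ 0 := by
    subst hτ
    exact mul_ne_zero ((map_ne_zero ι).mpr hθ) (by simpa using hσ)
  have hu_inv : (ι θ * τ ^ 2)⁻¹ = σ ^ 2 * (ι θ)⁻¹ := by
    rw [mul_inv_rev, hτ, inv_pow, inv_inv]
  let u : F[X]ˣ := Units.map (C : F →+* F[X]).toMonoidHom (Units.mk0 _ hu)
  have hu_val : (u : F[X]) = C (ι θ * τ ^ 2) := rfl
  have hu_inv_val : ((u⁻¹ : F[X]ˣ) : F[X]) = C (σ ^ 2 * (ι θ)⁻¹) := by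
    rw [← hu_inv]
    rfl
  rw [map_neg, ← hu_val, ← hu_inv_val]
  exact Matrix.exists_isUnit_mul_mul_eq_diagonal_fin_two _ u

/-- Over `K({σ})[t]`, the matrix `t·I₂ − D₂`, where
`D₂ = I₂ + I₂τ + [[0,0],[θ,0]]τ²`, can be transformed by elementary row and column
operations into the diagonal matrix `diag(1, λ₂)`, where
`λ₂ = (t − τ − 1)(−σ²θ⁻¹)(t − τ − 1)`.  Equivalently, there exist invertible matrices
`P, Q ∈ GL₂(K({σ})[t])` with `P·(tI₂ − D₂)·Q = diag(1, λ₂)`. -/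
theorem tI_sub_D2_diagonalization (q : ℕ) (Fq K F : Type*)
    [Field Fq] [Fintype Fq] (hcard : Fintype.card Fq = q)
    [Field K] [PerfectField K] [Algebra Fq K] [DivisionRing F]
    (ι : K →+* F) (σ τ : F) (hσ : σ ≠ 0) (hτ : τ = σ⁻¹)
    (twist : ∀ a : K, σ * ι (a ^ q) = ι a * σ)
    (θ : K) (hθ : θ ≠ 0) :
    ∃ P Q : Matrix (Fin 2) (Fin 2) (Polynomial F), IsUnit P ∧ IsUnit Q ∧
      P * !![X - C τ - 1, 0; -(C (ι θ * τ ^ 2)), X - C τ - 1] * Q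
        = Matrix.diagonal
            ![1, (X - C τ - 1) * C (-(σ ^ 2 * (ι θ)⁻¹)) * (X - C τ - 1)] :=
  tI_sub_D2_diagonalization_general K F ι σ τ hσ hτ θ hθ
end
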